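/- arXiv:1311.5140 — 3 statements merged into one kernel-verified Lean document; each statement's English description precedes it below -/
import Mathlib

section
/- Let w = w_1 w_2 ⋯ w_n be a product of matrices where each w_i is either L = [[1,1],[0,1]] or R = [[1,0],[1,1]], and let w' be obtained from w by inserting one additional letter x ∈ {L,R} at any position. Then trace(w) ≤ trace(w'). -/
def Lmat : Matrix (Fin 2) (Fin 2) ℤ := !![1, 1; 0, 1]
def Rmat : Matrix (Fin 2) (Fin 2) ℤ := !![1, 0; 1, 1]

lemma prod_entry_nonneg (l : List (Matrix (Fin 2) (Fin 2) ℤ))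
    (h : ∀ m ∈ l, m = Lmat ∨ m = Rmat) : ∀ i j, 0 ≤ l.prod i j := by
  induction l with
  | nil => intro i j; fin_cases i <;> fin_cases j <;> simp [Matrix.one_apply]
  | cons a t ih =>
    intro i j
    rw [List.prod_cons, Matrix.mul_apply]
    apply Finset.sum_nonneg
    intro k _
    have ha := h a (by simp)
    have hk : 0 ≤ a i k := by
      rcases ha with h | h <;> subst h <;> fin_cases i <;> fin_cases k <;>
        simp [Lmat, Rmat]
    exact mul_nonneg hk (ih (fun m hm => h m (by simp [hm])) k j)

/-- Inserting one letter `x ∈ {L, R}` anywhere in a word in `L` and `R`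
does not decrease the trace of the product. -/
theorem trace_le_trace_insert (w₁ w₂ : List (Matrix (Fin 2) (Fin 2) ℤ))
    (hw : ∀ m ∈ w₁ ++ w₂, m = Lmat ∨ m = Rmat)
    (x : Matrix (Fin 2) (Fin 2) ℤ) (hx : x = Lmat ∨ x = Rmat) :
    Matrix.trace ((w₁ ++ w₂).prod) ≤ Matrix.trace ((w₁ ++ [x] ++ w₂).prod) := by
  have h₁ : ∀ m ∈ w₁, m = Lmat ∨ m = Rmat := fun m hm => hw m (by simp [hm])
  have h₂ : ∀ m ∈ w₂, m = Lmat ∨ m = Rmat := fun m hm => hw m (by simp [hm])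
  have hMn : ∀ i j, 0 ≤ (w₂.prod * w₁.prod) i j := by
    rw [← List.prod_append]
    exact prod_entry_nonneg _ (fun m hm => (List.mem_append.mp hm).elim (h₂ m) (h₁ m))
  have e1 : Matrix.trace ((w₁ ++ w₂).prod) = Matrix.trace (w₂.prod * w₁.prod) := by
    rw [List.prod_append, Matrix.trace_mul_comm]
  have e2 : Matrix.trace ((w₁ ++ [x] ++ w₂).prod)
      = Matrix.trace (x * (w₂.prod * w₁.prod)) := by
    rw [List.prod_append, List.prod_append, List.prod_singleton, mul_assoc,
      Matrix.trace_mul_comm, mul_assoc]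
  rw [e1, e2]
  obtain ⟨M, hM⟩ : ∃ M, w₂.prod * w₁.prod = M := ⟨_, rfl⟩
  rw [hM] at hMn ⊢
  have h00 := hMn 0 0
  have h01 := hMn 0 1
  have h10 := hMn 1 0
  have h11 := hMn 1 1
  rcases hx with h | h <;> subst h <;>
    simp [Matrix.trace_fin_two, Matrix.mul_apply, Matrix.vecMul, dotProduct, Fin.sum_univ_two, Lmat, Rmat] <;>
    linarith
end

section
/- For every positive integer n, n! = √(2πn) (n/e)^n e^{λ_n} where 1/(12n+1) ≤ λ_n ≤ 1/(12n). -/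
open Real Filter Nat Topology

namespace Robbins

lemma alg1 (N : ℝ) (hN : 1 ≤ N) :
    1 / 3 * ((1 / (2 * N + 1)) ^ 2 * (1 - (1 / (2 * N + 1)) ^ 2)⁻¹) =
      1 / (12 * N) - 1 / (12 * (N + 1)) := by
  have h1 : (2 * N + 1) ≠ 0 := by positivity
  have h2 : 1 - (1 / (2 * N + 1)) ^ 2 ≠ 0 := by
    rw [div_pow, one_pow]
    have : (1 : ℝ) / (2 * N + 1) ^ 2 < 1 := by
      rw [div_lt_one (by positivity)]; nlinarith
    intro h; rw [sub_eq_zero] at h; rw [← h] at this; norm_num at this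
  have h3 : N ≠ 0 := by positivity
  have h4 : N + 1 ≠ 0 := by positivity
  have h5 : (N * 12 + N ^ 2 * 12 : ℝ) ≠ 0 := by positivity
  field_simp
  rw [div_eq_iff (by nlinarith : (0:ℝ) < (2 * N + 1) ^ 2 - 1).ne']; ring

lemma alg2 (N : ℝ) (hN : 1 ≤ N) :
    1 / (12 * N + 1) - 1 / (12 * (N + 1) + 1) ≤
      (1 / (2 * N + 1)) ^ 2 / 3 * (1 - (1 / (2 * N + 1)) ^ 2 / 3)⁻¹ := by
  have h1 : (0 : ℝ) < 2 * N + 1 := by positivity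
  have hRHS : (1 / (2 * N + 1)) ^ 2 / 3 * (1 - (1 / (2 * N + 1)) ^ 2 / 3)⁻¹ =
      1 / (12 * N ^ 2 + 12 * N + 2) := by
    have h2 : 1 - (1 / (2 * N + 1)) ^ 2 / 3 ≠ 0 := by
      rw [div_pow, one_pow]
      have : (1 : ℝ) / (2 * N + 1) ^ 2 / 3 < 1 := by
        rw [div_lt_one (by norm_num), div_lt_iff₀ (by positivity)]; nlinarith
      intro h; rw [sub_eq_zero] at h; rw [← h] at this; norm_num at this
    have h3 : (12 * N ^ 2 + 12 * N + 2 : ℝ) ≠ 0 := by positivity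
    have h4 : (2 + N * 12 + N ^ 2 * 12 : ℝ) ≠ 0 := by positivity
    field_simp
    linear_combination mul_inv_cancel₀ h4
  rw [hRHS, div_sub_div _ _ (by positivity) (by positivity),
    div_le_div_iff₀ (by positivity) (by positivity)]
  nlinarith [sq_nonneg N]

lemma diff_le (m : ℕ) :
    Real.log (Stirling.stirlingSeq (m + 1)) - Real.log (Stirling.stirlingSeq (m + 2)) ≤
      1 / (12 * ((m : ℝ) + 1)) - 1 / (12 * (((m : ℝ) + 1) + 1)) := by
  set x : ℝ := ((1 : ℝ) / (2 * ↑(m + 1) + 1)) ^ 2 with hx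
  have hx0 : (0 : ℝ) < x := by rw [hx]; positivity
  have hx1 : x < 1 := by
    rw [hx, div_pow, one_pow, div_lt_one (by positivity)]
    have : (1 : ℝ) ≤ (↑(m + 1) : ℝ) := by exact_mod_cast m.succ_pos
    nlinarith
  have geo := ((hasSum_geometric_of_lt_one hx0.le hx1).mul_left x).mul_left ((1 : ℝ) / 3)
  simp_rw [← _root_.pow_succ'] at geo
  have hle := hasSum_le (f := fun k : ℕ =>
      (1 : ℝ) / (2 * ↑(k + 1) + 1) * x ^ (k + 1)) (g := fun k => (1 : ℝ) / 3 * x ^ (k + 1))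
    (fun k => by
      apply mul_le_mul_of_nonneg_right _ (by positivity)
      apply div_le_div_of_nonneg_left (by norm_num) (by norm_num)
      push_cast; linarith [Nat.cast_nonneg (α := ℝ) k])
    (Stirling.log_stirlingSeq_diff_hasSum m) geo
  refine hle.trans (le_of_eq ?_)
  have := alg1 ((m : ℝ) + 1) (by linarith [Nat.cast_nonneg (α := ℝ) m])
  rw [hx]
  push_cast
  convert this using 3

lemma two_add_one_le_three_pow (k : ℕ) : (2 * (k + 1) + 1 : ℕ) ≤ 3 ^ (k + 1) := by
  induction k with
  | zero => norm_num
  | succ j ih =>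
    have h : (3 : ℕ) ^ (j + 1 + 1) = 3 * 3 ^ (j + 1) := by ring
    omega

lemma diff_ge (m : ℕ) :
    1 / (12 * ((m : ℝ) + 1) + 1) - 1 / (12 * (((m : ℝ) + 1) + 1) + 1) ≤
      Real.log (Stirling.stirlingSeq (m + 1)) - Real.log (Stirling.stirlingSeq (m + 2)) := by
  set x : ℝ := ((1 : ℝ) / (2 * ↑(m + 1) + 1)) ^ 2 with hx
  have hx0 : (0 : ℝ) < x := by rw [hx]; positivity
  have hx19 : x ≤ 1 / 9 := by
    rw [hx, div_pow, one_pow, div_le_div_iff₀ (by positivity) (by norm_num)]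
    have : (1 : ℝ) ≤ (↑(m + 1) : ℝ) := by exact_mod_cast Nat.one_le_iff_ne_zero.2 (Nat.succ_ne_zero m)
    nlinarith
  have hx31 : x / 3 < 1 := by linarith
  have geo := (hasSum_geometric_of_lt_one (by positivity) hx31).mul_left (x / 3)
  simp_rw [← _root_.pow_succ'] at geo
  have hterm : ∀ k : ℕ, (x / 3) ^ (k + 1) ≤
      (1 : ℝ) / (2 * ↑(k + 1) + 1) * x ^ (k + 1) := by
    intro k
    rw [div_pow, one_div_mul_eq_div]
    apply div_le_div_of_nonneg_left (by positivity) (by positivity)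
    have h3 := two_add_one_le_three_pow k
    calc (2 * (↑(k + 1) : ℝ) + 1) = ((2 * (k + 1) + 1 : ℕ) : ℝ) := by push_cast; ring
      _ ≤ ((3 ^ (k + 1) : ℕ) : ℝ) := by exact_mod_cast h3
      _ = (3 : ℝ) ^ (k + 1) := by push_cast; ring
  have hle := hasSum_le hterm geo (Stirling.log_stirlingSeq_diff_hasSum m)
  refine le_trans ?_ hle
  have := alg2 ((m : ℝ) + 1) (by linarith [Nat.cast_nonneg (α := ℝ) m])
  rw [hx]
  push_cast
  convert this using 3

end Robbins

namespace Robbins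

lemma tendsto_log_stirling :
    Tendsto (fun m : ℕ => Real.log (Stirling.stirlingSeq (m + 1))) atTop
      (𝓝 (Real.log (Real.sqrt π))) := by
  have hpos : (0 : ℝ) < Real.sqrt π := Real.sqrt_pos.2 Real.pi_pos
  exact ((Real.continuousAt_log hpos.ne').tendsto).comp
    (Stirling.tendsto_stirlingSeq_sqrt_pi.comp (tendsto_add_atTop_nat 1))

lemma tendsto_aux (c : ℝ) (hc : 0 ≤ c) :
    Tendsto (fun m : ℕ => 1 / (12 * ((m : ℝ) + 1) + c)) atTop (𝓝 0) := by
  have h : Tendsto (fun m : ℕ => 12 * ((m : ℝ) + 1) + c) atTop atTop := by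
    apply tendsto_atTop_mono (fun m => ?_) tendsto_natCast_atTop_atTop
    have : (0 : ℝ) ≤ (m : ℝ) := Nat.cast_nonneg m
    linarith
  simpa only [one_div, Pi.inv_def] using h.inv_tendsto_atTop

lemma upper (m : ℕ) :
    Real.log (Stirling.stirlingSeq (m + 1)) - Real.log (Real.sqrt π) ≤
      1 / (12 * ((m : ℝ) + 1)) := by
  set L := Real.log (Real.sqrt π) with hL
  set u : ℕ → ℝ := fun m => Real.log (Stirling.stirlingSeq (m + 1)) - L
    - 1 / (12 * ((m : ℝ) + 1)) with hu
  have hmono : Monotone u := by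
    apply monotone_nat_of_le_succ
    intro k
    have h := diff_le k
    simp only [hu]
    push_cast
    linarith
  have htend : Tendsto u atTop (𝓝 0) := by
    have h1 := tendsto_log_stirling
    have h2 : Tendsto (fun m : ℕ => 1 / (12 * ((m : ℝ) + 1))) atTop (𝓝 0) := by
      simpa only [add_zero] using tendsto_aux 0 le_rfl
    have := (h1.sub_const L).sub h2
    rw [show Real.log (Real.sqrt π) - L - 0 = 0 by rw [hL]; ring] at this
    exact this
  have : u m ≤ 0 :=
    ge_of_tendsto htend (eventually_atTop.2 ⟨m, fun k hk => hmono hk⟩)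
  simp only [hu] at this
  linarith

lemma lower (m : ℕ) :
    1 / (12 * ((m : ℝ) + 1) + 1) ≤
      Real.log (Stirling.stirlingSeq (m + 1)) - Real.log (Real.sqrt π) := by
  set L := Real.log (Real.sqrt π) with hL
  set v : ℕ → ℝ := fun m => Real.log (Stirling.stirlingSeq (m + 1)) - L
    - 1 / (12 * ((m : ℝ) + 1) + 1) with hv
  have hanti : Antitone v := by
    apply antitone_nat_of_succ_le
    intro k
    have h := diff_ge k
    simp only [hv]
    push_cast
    linarith
  have htend : Tendsto v atTop (𝓝 0) := by
    have h1 := tendsto_log_stirling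
    have h2 := tendsto_aux 1 (by norm_num)
    have := (h1.sub_const L).sub h2
    rw [show Real.log (Real.sqrt π) - L - 0 = 0 by rw [hL]; ring] at this
    exact this
  have : 0 ≤ v m :=
    le_of_tendsto htend (eventually_atTop.2 ⟨m, fun k hk => hanti hk⟩)
  simp only [hv] at this
  linarith

end Robbins

/-- Robbins' sharpening of Stirling's formula: for every positive integer `n`,
`n! = √(2πn) (n/e)^n e^{λ_n}` where `1/(12n+1) ≤ λ_n ≤ 1/(12n)`. -/
theorem robbins_stirling (n : ℕ) (hn : 0 < n) :
    ∃ lam : ℝ,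
      (Nat.factorial n : ℝ)
        = Real.sqrt (2 * Real.pi * n) * ((n : ℝ) / Real.exp 1) ^ n * Real.exp lam ∧
      1 / (12 * (n : ℝ) + 1) ≤ lam ∧ lam ≤ 1 / (12 * (n : ℝ)) := by
  obtain ⟨m, rfl⟩ := Nat.exists_eq_succ_of_ne_zero hn.ne'
  refine ⟨Real.log (Stirling.stirlingSeq (m + 1)) - Real.log (Real.sqrt π), ?_, ?_, ?_⟩
  · have hSpos := Stirling.stirlingSeq'_pos m
    have hsqrtpi : (0 : ℝ) < Real.sqrt π := Real.sqrt_pos.2 Real.pi_pos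
    have hcast : (0 : ℝ) < ((m + 1 : ℕ) : ℝ) := Nat.cast_pos.2 m.succ_pos
    have hsqrt2n : (0 : ℝ) < Real.sqrt (2 * ((m + 1 : ℕ) : ℝ)) := Real.sqrt_pos.2 (by positivity)
    have hpow : (0 : ℝ) < (((m + 1 : ℕ) : ℝ) / Real.exp 1) ^ (m + 1) := by positivity
    rw [Real.exp_sub, Real.exp_log hSpos, Real.exp_log hsqrtpi]
    have hsplit : Real.sqrt (2 * Real.pi * ((m + 1 : ℕ) : ℝ))
        = Real.sqrt π * Real.sqrt (2 * ((m + 1 : ℕ) : ℝ)) := by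
      rw [show (2 * Real.pi * ((m + 1 : ℕ) : ℝ)) = π * (2 * ((m + 1 : ℕ) : ℝ)) by ring,
        Real.sqrt_mul Real.pi_pos.le]
    rw [hsplit, Stirling.stirlingSeq]
    field_simp
  · have := Robbins.lower m
    push_cast
    convert this using 3
  · have := Robbins.upper m
    push_cast
    convert this using 3
end

section
/- For integers k ≥ 3, the equivalence class of the word L^{k−2}R (under cyclic permutation and the reversal-with-swap operation) has exactly 2(k−1) elements when k > 3, and consequently the product over all classes [w] of trace k of exp(−|[w]|/(2|w|)) is at most e^{−1}. -/
/-- The letter `L` (for `true`) resp. `R` (for `false`) as a matrix. -/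
def toMat : Bool → Matrix (Fin 2) (Fin 2) ℤ := fun b => if b then !![1, 1; 0, 1] else !![1, 0; 1, 1]

/-- The trace of the matrix product associated to a word in `L` and `R`. -/
def wordTrace (w : List Bool) : ℤ := Matrix.trace (w.map toMat).prod

/-- Two words are equivalent if one is a cyclic permutation of the other, or a cyclic
permutation of the reversed word with every `L` replaced by `R` and vice versa. -/
def WordEquiv (w w' : List Bool) : Prop :=
  (∃ n, w' = w.rotate n) ∨ (∃ n, w' = (w.reverse.map not).rotate n)

/-- The equivalence class of a word. -/
def wordClass (w : List Bool) : Set (List Bool) := {w' | WordEquiv w w'}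

/-- The common length of the words in a class (all equivalent words have equal length). -/
noncomputable def classLength (S : Set (List Bool)) : ℕ := sSup (List.length '' S)

lemma prod_entries (w : List Bool) :
    1 ≤ ((w.map toMat).prod) 0 0 ∧ 1 ≤ ((w.map toMat).prod) 1 1 ∧
    0 ≤ ((w.map toMat).prod) 0 1 ∧ 0 ≤ ((w.map toMat).prod) 1 0 ∧
    (w.length : ℤ) + 2 ≤ ((w.map toMat).prod) 0 0 + ((w.map toMat).prod) 0 1
      + ((w.map toMat).prod) 1 0 + ((w.map toMat).prod) 1 1 ∧
    ((w.map toMat).prod) 0 0 * ((w.map toMat).prod) 1 1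
      - ((w.map toMat).prod) 0 1 * ((w.map toMat).prod) 1 0 = 1 := by
  induction w with
  | nil => simp [Matrix.one_apply]
  | cons b t ih =>
    obtain ⟨h1, h2, h3, h4, h5, h6⟩ := ih
    simp only [List.map_cons, List.prod_cons, Matrix.mul_apply, Fin.sum_univ_two,
      List.length_cons] at *
    cases b <;>
      simp only [toMat, if_true, if_false, Bool.false_eq_true] <;>
      norm_num [Matrix.cons_val_zero, Matrix.cons_val_one, Matrix.head_cons,
        Matrix.head_fin_const] <;>
      refine ⟨by nlinarith, by nlinarith, by nlinarith, by nlinarith, by nlinarith,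
        by linear_combination h6⟩

lemma length_le_of_trace {k : ℕ} (hk : 3 < k) {w : List Bool} (h : wordTrace w = (k:ℤ)) :
    w.length ≤ 3 * k * k := by
  obtain ⟨h1, h2, h3, h4, h5, h6⟩ := prod_entries w
  rw [wordTrace, Matrix.trace_fin_two] at h
  set a := ((w.map toMat).prod) 0 0
  set b := ((w.map toMat).prod) 0 1
  set c := ((w.map toMat).prod) 1 0
  set d := ((w.map toMat).prod) 1 1
  have hk' : (4:ℤ) ≤ (k:ℤ) := by exact_mod_cast hk
  have hb : 1 ≤ b := by nlinarith
  have hc : 1 ≤ c := by nlinarith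
  have hbk : b ≤ (k:ℤ) * k := by nlinarith
  have hck : c ≤ (k:ℤ) * k := by nlinarith
  have : (w.length : ℤ) ≤ 3 * k * k := by nlinarith
  exact_mod_cast this

lemma powL (n : ℕ) : (List.map toMat (List.replicate n true)).prod = !![1,(n:ℤ);0,1] := by
  induction n with
  | zero => simp [Matrix.one_fin_two]
  | succ n ih =>
    rw [List.replicate_succ, List.map_cons, List.prod_cons, ih]
    show !![1, 1; 0, 1] * _ = _
    rw [Matrix.mul_fin_two]
    norm_num

lemma leadT (j : ℕ) (rest : List Bool) :
    ((List.replicate j true ++ false :: rest).takeWhile (fun x => x)).length = j := by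
  induction j with
  | zero => simp [List.takeWhile]
  | succ n ih => simpa [List.replicate_succ, List.takeWhile_cons] using ih

lemma leadF (j : ℕ) (rest : List Bool) :
    ((List.replicate j false ++ true :: rest).takeWhile (fun x => !x)).length = j := by
  induction j with
  | zero => simp [List.takeWhile]
  | succ n ih => simpa [List.replicate_succ, List.takeWhile_cons] using ih

lemma rotW (m n : ℕ) (hn : n ≤ m+2) :
    (List.replicate (m+2) true ++ [false]).rotate n
      = List.replicate (m+2-n) true ++ false :: List.replicate n true := by
  rw [List.rotate_eq_drop_append_take (by simp; omega)]
  rw [List.drop_append_of_le_length (by simpa using hn),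
    List.take_append_of_le_length (by simpa using hn)]
  simp [List.take_replicate, Nat.min_eq_left hn]

lemma rotV (m j : ℕ) (hj : j ≤ m+1) :
    (true :: List.replicate (m+2) false).rotate (j+1)
      = List.replicate (m+2-j) false ++ true :: List.replicate j false := by
  have h1 : (true :: List.replicate (m+2) false) = [true] ++ List.replicate (m+2) false := rfl
  rw [List.rotate_eq_drop_append_take (by simp; omega), h1]
  rw [show j + 1 = [true].length + j from by simp [Nat.add_comm],
    List.drop_append, List.take_append]
  simp [List.take_replicate, Nat.min_eq_left (by omega : j ≤ m+2), Nat.add_comm 1 j]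

/-- For `k > 3`, the class of `L^{k−2}R` has exactly `2(k−1)` elements, and consequently
the product over all classes `[w]` of trace `k` of `exp(−|[w]|/(2|w|))` is at most `e⁻¹`. -/
theorem wordClass_card_and_product_bound (k : ℕ) (hk : 3 < k) :
    (wordClass (List.replicate (k-2) true ++ [false])).ncard = 2*(k-1) ∧
    (∏ᶠ S ∈ {S : Set (List Bool) | ∃ w : List Bool, wordTrace w = (k : ℤ) ∧ S = wordClass w},
        Real.exp (-(S.ncard : ℝ) / (2 * (classLength S : ℝ))))
      ≤ Real.exp (-1) := by
  classical
  obtain ⟨m, rfl⟩ : ∃ m, k = m + 4 := ⟨k - 4, by omega⟩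
  set k := m + 4 with hkdef
  have hk2 : k - 2 = m + 2 := by omega
  have hk1 : k - 1 = m + 3 := by omega
  set w₀ : List Bool := List.replicate (m+2) true ++ [false] with hw₀
  set v₀ : List Bool := true :: List.replicate (m+2) false with hv₀
  have hrev : w₀.reverse.map not = v₀ := by
    simp [hw₀, hv₀, List.reverse_append, List.map_replicate]
  have hlenw : w₀.length = m + 3 := by simp [hw₀]
  have hlenv : v₀.length = m + 3 := by simp [hv₀]
  -- the class as a finset
  set A : Finset (List Bool) := (Finset.range (m+3)).image w₀.rotate with hA
  set B : Finset (List Bool) := (Finset.range (m+3)).image v₀.rotate with hB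
  have hclass : wordClass w₀ = ↑(A ∪ B) := by
    ext x
    simp only [wordClass, WordEquiv, Set.mem_setOf_eq, hrev, Finset.coe_union, Set.mem_union,
      hA, hB, Finset.coe_image, Finset.coe_range, Set.mem_image, Set.mem_Iio]
    constructor
    · rintro (⟨n, rfl⟩ | ⟨n, rfl⟩)
      · exact Or.inl ⟨n % (m+3), Nat.mod_lt _ (by omega), by rw [← hlenw, List.rotate_mod]⟩
      · exact Or.inr ⟨n % (m+3), Nat.mod_lt _ (by omega), by rw [← hlenv, List.rotate_mod]⟩
    · rintro (⟨n, _, rfl⟩ | ⟨n, _, rfl⟩)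
      exacts [Or.inl ⟨n, rfl⟩, Or.inr ⟨n, rfl⟩]
  have cardA : A.card = m + 3 := by
    rw [hA, Finset.card_image_of_injOn, Finset.card_range]
    intro a ha b hb hab
    simp only [Finset.coe_range, Set.mem_Iio] at ha hb
    have h1 := leadT (m+2-a) (List.replicate a true)
    have h2 := leadT (m+2-b) (List.replicate b true)
    rw [← rotW m a (by omega)] at h1
    rw [← rotW m b (by omega)] at h2
    rw [hab, h2] at h1
    omega
  have cardB : B.card = m + 3 := by
    rw [hB, Finset.card_image_of_injOn, Finset.card_range]
    intro a ha b hb hab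
    simp only [Finset.coe_range, Set.mem_Iio] at ha hb
    have key : ∀ n < m + 3, ((v₀.rotate n).takeWhile (fun x => !x)).length
        = if n = 0 then 0 else m + 3 - n := by
      intro n hn
      rcases n with _ | j
      · simp [hv₀, List.takeWhile_cons]
      · rw [rotV m j (by omega), leadF, if_neg (Nat.succ_ne_zero j)]
        omega
    have h1 := key a ha
    have h2 := key b hb
    rw [hab, h2] at h1
    by_cases haz : a = 0 <;> by_cases hbz : b = 0 <;> simp [haz, hbz] at h1 <;> omega
  have countw : ∀ x ∈ A, x.count false = 1 := by
    intro x hx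
    simp only [hA, Finset.mem_image] at hx
    obtain ⟨n, _, rfl⟩ := hx
    rw [(List.rotate_perm w₀ n).count_eq, hw₀, List.count_append,
      List.count_eq_zero.mpr (by simp)]
    simp
  have countv : ∀ x ∈ B, x.count false = m + 2 := by
    intro x hx
    simp only [hB, Finset.mem_image] at hx
    obtain ⟨n, _, rfl⟩ := hx
    rw [(List.rotate_perm v₀ n).count_eq]
    have hrep : (List.replicate (m+2) false).count false = m+2 := by
      rw [List.count_eq_length.mpr (by simp), List.length_replicate]
    simp [hv₀, List.count_cons, hrep]
  have hdisj : Disjoint A B := by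
    rw [Finset.disjoint_left]
    intro x hxA hxB
    have := countw x hxA
    have := countv x hxB
    omega
  have hcard : (wordClass w₀).ncard = 2 * (m + 3) := by
    rw [hclass, Set.ncard_coe_finset, Finset.card_union_of_disjoint hdisj, cardA, cardB]
    omega
  -- trace of w₀
  have htrace : wordTrace w₀ = (k : ℤ) := by
    rw [hw₀, wordTrace, List.map_append, List.prod_append, powL]
    simp only [List.map_cons, List.map_nil, List.prod_cons, List.prod_nil, mul_one]
    show Matrix.trace (!![1,((m+2:ℕ):ℤ);0,1] * !![1, 0; 1, 1]) = _
    rw [Matrix.mul_fin_two, Matrix.trace_fin_two]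
    push_cast
    norm_num
    rw [hkdef]; push_cast; ring
  -- class length
  have hlen : classLength (wordClass w₀) = m + 3 := by
    have him : List.length '' (wordClass w₀) = {m+3} := by
      ext n
      constructor
      · rintro ⟨x, hx, rfl⟩
        rw [hclass] at hx
        simp only [Finset.coe_union, Set.mem_union, Finset.mem_coe, Finset.mem_image] at hx
        rcases hx with hx | hx <;>
          · obtain ⟨j, _, rfl⟩ := Finset.mem_image.mp hx
            simp [List.length_rotate, hlenw, hlenv]
      · rintro rfl
        exact ⟨w₀, Or.inl ⟨0, (List.rotate_zero w₀).symm⟩, hlenw⟩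
    rw [classLength, him, csSup_singleton]
  -- finiteness of the set of classes
  set P : Set (Set (List Bool)) :=
    {S | ∃ w : List Bool, wordTrace w = (k : ℤ) ∧ S = wordClass w} with hP
  have hPfin : P.Finite := by
    have h1 : {w : List Bool | wordTrace w = (k:ℤ)}.Finite :=
      (List.finite_length_le Bool (3*k*k)).subset
        (fun w hw => length_le_of_trace (by omega) hw)
    refine (h1.image wordClass).subset ?_
    rintro S ⟨w, hw, rfl⟩
    exact ⟨w, hw, rfl⟩
  have hmem : wordClass w₀ ∈ hPfin.toFinset := by
    rw [Set.Finite.mem_toFinset]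
    exact ⟨w₀, htrace, rfl⟩
  constructor
  · rw [hk2, hk1, ← hw₀]
    exact hcard
  · rw [finprod_mem_eq_finite_toFinset_prod _ hPfin]
    set f : Set (List Bool) → ℝ :=
      fun S => Real.exp (-(S.ncard : ℝ) / (2 * (classLength S : ℝ))) with hf
    have hfS₀ : f (wordClass w₀) = Real.exp (-1) := by
      rw [hf]
      simp only [hcard, hlen]
      congr 1
      rw [div_eq_iff (by positivity)]
      push_cast
      ring
    have hle1 : ∀ S ∈ (hPfin.toFinset).erase (wordClass w₀), f S ≤ 1 := by
      intro S _
      rw [hf]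
      refine Real.exp_le_one_iff.mpr ?_
      apply div_nonpos_of_nonpos_of_nonneg
      · simp
      · positivity
    calc ∏ S ∈ hPfin.toFinset, f S
        = f (wordClass w₀) * ∏ S ∈ hPfin.toFinset.erase (wordClass w₀), f S :=
          (Finset.mul_prod_erase _ f hmem).symm
      _ ≤ Real.exp (-1) * 1 := by
          rw [hfS₀]
          exact mul_le_mul_of_nonneg_left
            (Finset.prod_le_one (fun i _ => (Real.exp_pos _).le) hle1) (Real.exp_pos _).le
      _ = Real.exp (-1) := mul_one _
end
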